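/- arXiv:1809.03176 — 2 statements merged into one kernel-verified Lean document; each statement's English description precedes it below -/
import Mathlib

section
/- Let X be a measurable space with a finite measure λ, and let π : X → (0,∞) be measurable with C_1 := sup_{x,y∈X} (1 + π(y)/π(x)) < ∞. For i = 1, 2 let p_i : X × X → [0,∞) be measurable transition functions, and define t_i(x,y) = min{ p_i(x,y), (π(y)/π(x)) p_i(y,x) } and the kernels K_i(x, A) = ∫_A t_i(x,y) λ(dy) + (1 − ∫_X t_i(x,z) λ(dz)) 1_{x∈A}, assuming ∫_X t_i(x,z) λ(dz) ≤ 1 for all x. Then for all x, y ∈ X, |t_1(x,y) − t_2(x,y)| ≤ |p_1(x,y) − p_2(x,y)| + (π(y)/π(x)) |p_1(y,x) − p_2(y,x)|, and consequently, if sup_{u,v∈X} |p_1(u,v) − p_2(u,v)| ≤ ε, then sup_{x∈X} ‖K_1(x,·) − K_2(x,·)‖_TV ≤ C_1 ε λ(X). -/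
/-!
The pointwise bound is the fact that `min` is 1-Lipschitz in each argument. For the kernels the
holding mass cancels out: for measurable `A`,
`K(x, A) = 1_A(x) + ∫ t(x, y) (1_A(y) - 1_A(x)) λ(dy)`,
so `K₁(x, A) - K₂(x, A)` integrates `t₁(x, ·) - t₂(x, ·)` against a function bounded by `1`,
and `|t₁ - t₂| ≤ (1 + π(y)/π(x)) ε ≤ C₁ ε` pointwise.
-/

open MeasureTheory
open scoped ENNReal

/-- Total variation distance between two measures: the supremum over measurable sets of
the absolute difference of the measures. -/
noncomputable def tvDist {X : Type*} [MeasurableSpace X] (μ ν : Measure X) : ℝ :=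
  ⨆ A : {A : Set X // MeasurableSet A}, |(μ A).toReal - (ν A).toReal|

lemma abs_indicator_one_sub_indicator_one_le {α : Type*} (A : Set α) (x y : α) :
    |A.indicator (1 : α → ℝ) y - A.indicator 1 x| ≤ 1 := by
  by_cases hx : x ∈ A <;> by_cases hy : y ∈ A <;> simp [hx, hy]

section Metropolis

variable {X : Type*}

/-- The paper's `t = p β`, written through the Metropolis ratio identity. -/
noncomputable def metropolisDensity (π : X → ℝ) (p : X → X → ℝ) (x y : X) : ℝ :=
  min (p x y) (π y / π x * p y x)

lemma abs_metropolisDensity_sub_le {π : X → ℝ} (hπ : ∀ z, 0 ≤ π z) (p q : X → X → ℝ) (x y : X) :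
    |metropolisDensity π p x y - metropolisDensity π q x y| ≤
      |p x y - q x y| + π y / π x * |p y x - q y x| := by
  have hr : 0 ≤ π y / π x := div_nonneg (hπ y) (hπ x)
  calc _ ≤ max |p x y - q x y| |π y / π x * p y x - π y / π x * q y x| :=
        abs_min_sub_min_le_max _ _ _ _
    _ ≤ |p x y - q x y| + |π y / π x * p y x - π y / π x * q y x| :=
        max_le_add_of_nonneg (abs_nonneg _) (abs_nonneg _)
    _ = |p x y - q x y| + π y / π x * |p y x - q y x| := by
        rw [← mul_sub, abs_mul, abs_of_nonneg hr]

variable [MeasurableSpace X]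

lemma measurable_metropolisDensity {π : X → ℝ} {p : X → X → ℝ} (hπ : Measurable π)
    (hp : Measurable (Function.uncurry p)) (x : X) : Measurable (metropolisDensity π p x) :=
  (hp.comp (measurable_const.prodMk measurable_id)).min
    ((hπ.div_const _).mul (hp.comp (measurable_id.prodMk measurable_const)))

/-- Move from `x` with the sub-probability density `f`, and stay at `x` with the remaining mass. -/
noncomputable def rejectionKernel (lam : Measure X) (f : X → ℝ≥0∞) (x : X) : Measure X :=
  lam.withDensity f + (1 - ∫⁻ z, f z ∂lam) • Measure.dirac x

lemma rejectionKernel_apply_toReal {lam : Measure X} {f : X → ℝ≥0∞} (hf : Measurable f)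
    (hf_le : ∫⁻ z, f z ∂lam ≤ 1) (x : X) {A : Set X} (hA : MeasurableSet A) :
    (rejectionKernel lam f x A).toReal =
      A.indicator 1 x + ∫ y, (f y).toReal * (A.indicator 1 y - A.indicator 1 x) ∂lam := by
  have hf_ne_top : ∫⁻ z, f z ∂lam ≠ ∞ := ne_top_of_le_ne_top ENNReal.one_ne_top hf_le
  have hg : Integrable (fun y => (f y).toReal) lam :=
    integrable_toReal_of_lintegral_ne_top hf.aemeasurable hf_ne_top
  have hA_ne_top : ∫⁻ z in A, f z ∂lam ≠ ∞ :=
    ne_top_of_le_ne_top hf_ne_top (setLIntegral_le_lintegral A f)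
  have h_int : ∫ y, (f y).toReal ∂lam = (∫⁻ z, f z ∂lam).toReal :=
    integral_toReal hf.aemeasurable (ae_lt_top hf hf_ne_top)
  have h_setInt : ∫ y in A, (f y).toReal ∂lam = (∫⁻ z in A, f z ∂lam).toReal :=
    integral_toReal hf.aemeasurable.restrict (ae_restrict_of_ae (ae_lt_top hf hf_ne_top))
  have h_mul : ∀ y, (f y).toReal * A.indicator 1 y = A.indicator (fun y => (f y).toReal) y := by
    intro y; by_cases hy : y ∈ A <;> simp [hy]
  simp only [mul_sub]
  rw [integral_sub (by simpa only [h_mul] using hg.indicator hA) (hg.mul_const _),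
    integral_mul_const, funext h_mul, integral_indicator hA, h_int, h_setInt,
    rejectionKernel, Measure.add_apply, withDensity_apply _ hA, Measure.smul_apply,
    Measure.dirac_apply' _ hA, smul_eq_mul]
  by_cases hx : x ∈ A
  · simp only [hx, Set.indicator_of_mem, Pi.one_apply, mul_one, ENNReal.toReal_one,
      ENNReal.toReal_add hA_ne_top (ENNReal.sub_ne_top ENNReal.one_ne_top),
      ENNReal.toReal_sub_of_le hf_le ENNReal.one_ne_top]
    ring
  · simp [hx]

theorem tvDist_rejectionKernel_le {lam : Measure X} [IsFiniteMeasure lam] {f₁ f₂ : X → ℝ≥0∞}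
    (hf₁ : Measurable f₁) (hf₂ : Measurable f₂)
    (hf₁_le : ∫⁻ z, f₁ z ∂lam ≤ 1) (hf₂_le : ∫⁻ z, f₂ z ∂lam ≤ 1) (x : X) {δ : ℝ}
    (hδ : ∀ y, |(f₁ y).toReal - (f₂ y).toReal| ≤ δ) :
    tvDist (rejectionKernel lam f₁ x) (rejectionKernel lam f₂ x) ≤ δ * (lam Set.univ).toReal := by
  refine ciSup_le fun ⟨A, hA⟩ => ?_
  set w : X → ℝ := fun y => A.indicator 1 y - A.indicator 1 x
  have w_meas : AEStronglyMeasurable w lam :=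
    ((measurable_const.indicator hA).sub_const _).aestronglyMeasurable
  have w_bound : ∀ y, ‖w y‖ ≤ 1 := abs_indicator_one_sub_indicator_one_le A x
  have h_int : ∀ {f : X → ℝ≥0∞}, Measurable f → ∫⁻ z, f z ∂lam ≤ 1 →
      Integrable (fun y => (f y).toReal * w y) lam := fun hf hf_le =>
    (integrable_toReal_of_lintegral_ne_top hf.aemeasurable
      (ne_top_of_le_ne_top ENNReal.one_ne_top hf_le)).mul_bdd w_meas (.of_forall w_bound)
  rw [rejectionKernel_apply_toReal hf₁ hf₁_le x hA, rejectionKernel_apply_toReal hf₂ hf₂_le x hA,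
    add_sub_add_left_eq_sub, ← integral_sub (h_int hf₁ hf₁_le) (h_int hf₂ hf₂_le),
    ← measureReal_def, ← Real.norm_eq_abs]
  refine norm_integral_le_of_norm_le_const (.of_forall fun y => ?_)
  rw [← sub_mul, norm_mul]
  exact (mul_le_of_le_one_right (norm_nonneg _) (w_bound y)).trans (hδ y)

end Metropolis

theorem two_stage_transition_tv_bound_general
    {X : Type*} [MeasurableSpace X] (lam : Measure X) [IsFiniteMeasure lam]
    (piD : X → ℝ) (hpiMeas : Measurable piD) (hpiPos : ∀ x, 0 < piD x)
    (C₁ : ℝ) (hC₁ : ∀ x y, 1 + piD y / piD x ≤ C₁)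
    (p₁ p₂ : X → X → ℝ)
    (hp₁Meas : Measurable (Function.uncurry p₁)) (hp₂Meas : Measurable (Function.uncurry p₂))
    (t₁ t₂ : X → X → ℝ)
    (ht₁ : ∀ x y, t₁ x y = min (p₁ x y) (piD y / piD x * p₁ y x))
    (ht₂ : ∀ x y, t₂ x y = min (p₂ x y) (piD y / piD x * p₂ y x))
    (hs₁ : ∀ x, ∫⁻ z, ENNReal.ofReal (t₁ x z) ∂lam ≤ 1)
    (hs₂ : ∀ x, ∫⁻ z, ENNReal.ofReal (t₂ x z) ∂lam ≤ 1)
    (K₁ K₂ : X → Measure X)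
    (hK₁ : ∀ x, K₁ x = lam.withDensity (fun y => ENNReal.ofReal (t₁ x y))
        + (1 - ∫⁻ z, ENNReal.ofReal (t₁ x z) ∂lam) • Measure.dirac x)
    (hK₂ : ∀ x, K₂ x = lam.withDensity (fun y => ENNReal.ofReal (t₂ x y))
        + (1 - ∫⁻ z, ENNReal.ofReal (t₂ x z) ∂lam) • Measure.dirac x) :
    (∀ x y, |t₁ x y - t₂ x y| ≤
      |p₁ x y - p₂ x y| + piD y / piD x * |p₁ y x - p₂ y x|) ∧
    ∀ ε : ℝ, 0 ≤ ε → (∀ u v, |p₁ u v - p₂ u v| ≤ ε) →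
      ∀ x, tvDist (K₁ x) (K₂ x) ≤ C₁ * ε * (lam Set.univ).toReal := by
  obtain rfl : t₁ = metropolisDensity piD p₁ := funext fun x => funext (ht₁ x)
  obtain rfl : t₂ = metropolisDensity piD p₂ := funext fun x => funext (ht₂ x)
  have hpt := abs_metropolisDensity_sub_le (fun z => (hpiPos z).le) p₁ p₂
  refine ⟨hpt, fun ε hε hp x => ?_⟩
  rw [hK₁, hK₂]
  refine tvDist_rejectionKernel_le (measurable_metropolisDensity hpiMeas hp₁Meas x).ennreal_ofReal
    (measurable_metropolisDensity hpiMeas hp₂Meas x).ennreal_ofReal (hs₁ x) (hs₂ x) x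
    fun y => ?_
  rw [ENNReal.toReal_ofReal', ENNReal.toReal_ofReal']
  calc _ ≤ |metropolisDensity piD p₁ x y - metropolisDensity piD p₂ x y| :=
        abs_max_sub_max_le_abs _ _ _
    _ ≤ ε + piD y / piD x * ε := by
        grw [hpt, hp x y, hp y x]
        exact div_nonneg (hpiPos y).le (hpiPos x).le
    _ = (1 + piD y / piD x) * ε := by ring
    _ ≤ C₁ * ε := by grw [hC₁ x y]

/-- with `t_i(x,y) = min{p_i(x,y), (π(y)/π(x)) p_i(y,x)}` and the kernels
`K_i(x,A) = ∫_A t_i(x,y) λ(dy) + (1 − ∫_X t_i(x,z) λ(dz)) 1_{x∈A}`, one has the pointwise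
bound `|t₁ − t₂| ≤ |p₁ − p₂| + (π(y)/π(x))|p₁(y,x) − p₂(y,x)|`; consequently, if
`sup |p₁ − p₂| ≤ ε` then `sup_x ‖K₁(x,·) − K₂(x,·)‖_TV ≤ C₁ ε λ(X)`. -/
theorem two_stage_transition_tv_bound
    {X : Type*} [MeasurableSpace X] (lam : Measure X) [IsFiniteMeasure lam]
    (piD : X → ℝ) (hpiMeas : Measurable piD) (hpiPos : ∀ x, 0 < piD x)
    (C₁ : ℝ) (hC₁ : ∀ x y, 1 + piD y / piD x ≤ C₁)
    (p₁ p₂ : X → X → ℝ)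
    (hp₁Meas : Measurable (Function.uncurry p₁)) (hp₂Meas : Measurable (Function.uncurry p₂))
    (hp₁Nonneg : ∀ x y, 0 ≤ p₁ x y) (hp₂Nonneg : ∀ x y, 0 ≤ p₂ x y)
    (t₁ t₂ : X → X → ℝ)
    (ht₁ : ∀ x y, t₁ x y = min (p₁ x y) (piD y / piD x * p₁ y x))
    (ht₂ : ∀ x y, t₂ x y = min (p₂ x y) (piD y / piD x * p₂ y x))
    (hs₁ : ∀ x, ∫⁻ z, ENNReal.ofReal (t₁ x z) ∂lam ≤ 1)
    (hs₂ : ∀ x, ∫⁻ z, ENNReal.ofReal (t₂ x z) ∂lam ≤ 1)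
    (K₁ K₂ : X → Measure X)
    (hK₁ : ∀ x, K₁ x = lam.withDensity (fun y => ENNReal.ofReal (t₁ x y))
        + (1 - ∫⁻ z, ENNReal.ofReal (t₁ x z) ∂lam) • Measure.dirac x)
    (hK₂ : ∀ x, K₂ x = lam.withDensity (fun y => ENNReal.ofReal (t₂ x y))
        + (1 - ∫⁻ z, ENNReal.ofReal (t₂ x z) ∂lam) • Measure.dirac x) :
    (∀ x y, |t₁ x y - t₂ x y| ≤
      |p₁ x y - p₂ x y| + piD y / piD x * |p₁ y x - p₂ y x|) ∧
    ∀ ε : ℝ, 0 ≤ ε → (∀ u v, |p₁ u v - p₂ u v| ≤ ε) →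
      ∀ x, tvDist (K₁ x) (K₂ x) ≤ C₁ * ε * (lam Set.univ).toReal :=
  two_stage_transition_tv_bound_general lam piD hpiMeas hpiPos C₁ hC₁ p₁ p₂ hp₁Meas hp₂Meas t₁ t₂
    ht₁ ht₂ hs₁ hs₂ K₁ K₂ hK₁ hK₂
end

section
/- Let X be a measurable space with a σ-finite measure λ, fix x ∈ X with λ({x}) = 0, let k : X × X → [0,∞) be measurable with ∫_X k(z, y) λ(dy) ≤ 1 for every z, set ρ(z) = 1 − ∫_X k(z, y) λ(dy), and define the Markov kernel K(z, A) = ∫_A k(z, y) λ(dy) + ρ(z) 1_{z∈A}. Then for every n ≥ 1 there exists a measurable function k_n(x, ·) : X → [0,∞) such that the n-step kernel satisfies K^n(x, A) = ∫_A k_n(x, y) λ(dy) + ρ(x)^n 1_{x∈A} for all measurable A ⊆ X. -/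
/-!
Binding against `K` is additive in both the measure and the kernel, `δ_x` binds to `K x`, and the
holding part `z ↦ ρ(z) δ_z` of `K` acts on `f·λ` by multiplying the density by `ρ`. Hence one step
maps `f·λ + c δ_x` to `(∫ f(z) k(z, ·) λ(dz) + f ρ + c k(x, ·))·λ + c ρ(x) δ_x` (Tonelli for the
first term), and induction on `n`, starting from `K x` itself, gives the claim.
-/

open MeasureTheory
open scoped ENNReal

/-- The `(n+1)`-step kernel of a transition kernel `K : X → Measure X`:
`iterStep K 0 = K` and `iterStep K (n+1) x (A) = ∫ (iterStep K n)(x, dz) K(z, A)`,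
so `iterStep K n` is the `(n+1)`-step kernel `K^{n+1}`. -/
noncomputable def iterStep {X : Type*} [MeasurableSpace X] (K : X → Measure X) :
    ℕ → X → Measure X
  | 0 => K
  | n + 1 => fun x => (iterStep K n x).bind K

namespace MeasureTheory.Measure

variable {X : Type*} [MeasurableSpace X]

theorem add_bind (μ ν : Measure X) {K : X → Measure X} (hK : Measurable K) :
    (μ + ν).bind K = μ.bind K + ν.bind K := by
  ext A hA
  simp only [add_apply, bind_apply hA hK.aemeasurable, lintegral_add_measure]

theorem bind_add (μ : Measure X) {K₁ K₂ : X → Measure X} (hK₁ : Measurable K₁)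
    (hK₂ : Measurable K₂) : μ.bind (fun z => K₁ z + K₂ z) = μ.bind K₁ + μ.bind K₂ := by
  ext A hA
  have hK : Measurable fun z => K₁ z + K₂ z := hK₁.add hK₂
  rw [bind_apply hA hK.aemeasurable, add_apply, bind_apply hA hK₁.aemeasurable,
    bind_apply hA hK₂.aemeasurable]
  exact lintegral_add_left ((measurable_coe hA).comp hK₁) _

theorem smul_dirac_apply {ρ : X → ℝ≥0∞} {A : Set X} (hA : MeasurableSet A) (z : X) :
    (ρ z • dirac z) A = A.indicator ρ z := by
  by_cases hz : z ∈ A <;> simp [dirac_apply' _ hA, hz]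

theorem measurable_smul_dirac {ρ : X → ℝ≥0∞} (hρ : Measurable ρ) :
    Measurable fun z => ρ z • dirac z :=
  measurable_of_measurable_coe _ fun A hA => by
    simp only [smul_dirac_apply hA]
    exact hρ.indicator hA

theorem bind_smul_dirac (μ : Measure X) {ρ : X → ℝ≥0∞} (hρ : Measurable ρ) :
    μ.bind (fun z => ρ z • dirac z) = μ.withDensity ρ := by
  ext A hA
  simp only [bind_apply hA (measurable_smul_dirac hρ).aemeasurable, withDensity_apply _ hA,
    smul_dirac_apply hA, lintegral_indicator hA]

theorem withDensity_bind_withDensity (μ ν : Measure X) [SFinite μ] [SFinite ν] {f : X → ℝ≥0∞}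
    (hf : Measurable f) {k : X → X → ℝ≥0∞} (hk : Measurable (Function.uncurry k)) :
    (μ.withDensity f).bind (fun z => ν.withDensity (k z)) =
      ν.withDensity (fun y => ∫⁻ z, f z * k z y ∂μ) := by
  ext A hA
  have hkA : Measurable fun z => ν.withDensity (k z) A :=
    (measurable_coe hA).comp (measurable_withDensity hk)
  rw [bind_apply hA (measurable_withDensity hk).aemeasurable, withDensity_apply _ hA,
    lintegral_withDensity_eq_lintegral_mul _ hf hkA]
  simp only [Pi.mul_apply, withDensity_apply _ hA]
  calc ∫⁻ z, f z * ∫⁻ y in A, k z y ∂ν ∂μ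
      = ∫⁻ z, ∫⁻ y in A, f z * k z y ∂ν ∂μ := by
        congr 1; funext z; rw [lintegral_const_mul _ hk.of_uncurry_left]
    _ = ∫⁻ y in A, ∫⁻ z, f z * k z y ∂μ ∂ν :=
        lintegral_lintegral_swap ((hf.comp measurable_fst).mul hk).aemeasurable

theorem withDensity_add_smul_dirac_bind (μ : Measure X) [SFinite μ] {k : X → X → ℝ≥0∞}
    (hk : Measurable (Function.uncurry k)) {ρ : X → ℝ≥0∞} (hρ : Measurable ρ) {f : X → ℝ≥0∞}
    (hf : Measurable f) (c : ℝ≥0∞) (x : X) :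
    (μ.withDensity f + c • dirac x).bind (fun z => μ.withDensity (k z) + ρ z • dirac z) =
      μ.withDensity (fun y => ∫⁻ z, f z * k z y ∂μ + f y * ρ y + c * k x y) +
        (c * ρ x) • dirac x := by
  have hkμ : Measurable fun z => μ.withDensity (k z) := measurable_withDensity hk
  have hK : Measurable fun z => μ.withDensity (k z) + ρ z • dirac z :=
    hkμ.add (measurable_smul_dirac hρ)
  rw [add_bind _ _ hK, bind_smul, dirac_bind hK, bind_add _ hkμ (measurable_smul_dirac hρ),
    withDensity_bind_withDensity _ _ hf hk, bind_smul_dirac _ hρ, ← withDensity_mul _ hf hρ]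
  have hF : Measurable fun y => ∫⁻ z, f z * k z y ∂μ := by fun_prop
  change _ = μ.withDensity ((fun y => ∫⁻ z, f z * k z y ∂μ) + f * ρ + c • k x) + _
  rw [withDensity_add_left (hF.add (hf.mul hρ)), withDensity_add_left hF,
    withDensity_smul _ hk.of_uncurry_left, smul_add, smul_smul]
  abel

end MeasureTheory.Measure

theorem iterated_kernel_decomposition_general
    {X : Type*} [MeasurableSpace X] (lam : Measure X) [SigmaFinite lam]
    (x : X)
    (k : X → X → ℝ≥0∞) (hkMeas : Measurable (Function.uncurry k))
    (ρ : X → ℝ≥0∞) (hρ : ∀ z, ρ z = 1 - ∫⁻ y, k z y ∂lam)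
    (K : X → Measure X)
    (hK : ∀ z, K z = lam.withDensity (k z) + ρ z • Measure.dirac z) :
    ∀ n : ℕ, ∃ kn : X → ℝ≥0∞, Measurable kn ∧
      iterStep K n x = lam.withDensity kn + (ρ x) ^ (n + 1) • Measure.dirac x := by
  have hρMeas : Measurable ρ := by
    rw [funext hρ]
    exact measurable_const.sub hkMeas.lintegral_prod_right'
  obtain rfl : K = fun z => lam.withDensity (k z) + ρ z • Measure.dirac z := funext hK
  intro n
  induction n with
  | zero => exact ⟨k x, hkMeas.of_uncurry_left, by simp [iterStep]⟩
  | succ n ih =>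
    obtain ⟨kn, hkn, hstep⟩ := ih
    refine ⟨fun y => ∫⁻ z, kn z * k z y ∂lam + kn y * ρ y + ρ x ^ (n + 1) * k x y,
      by fun_prop, ?_⟩
    dsimp only [iterStep]
    rw [hstep, Measure.withDensity_add_smul_dirac_bind lam hkMeas hρMeas hkn, ← pow_succ]

/-- for a kernel `K(z,·) = k(z,·)·λ + ρ(z) δ_z` with
`ρ(z) = 1 − ∫ k(z,y) λ(dy)` and `λ({x}) = 0`, every `n`-step iterate (here
`iterStep K n = K^{n+1}`, `n ≥ 0`) decomposes as an absolutely continuous part plus the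
point mass `ρ(x)^{n+1} δ_x` at the starting state. -/
theorem iterated_kernel_decomposition
    {X : Type*} [MeasurableSpace X] (lam : Measure X) [SigmaFinite lam]
    (x : X) (hx : lam {x} = 0)
    (k : X → X → ℝ≥0∞) (hkMeas : Measurable (Function.uncurry k))
    (hkle : ∀ z, ∫⁻ y, k z y ∂lam ≤ 1)
    (ρ : X → ℝ≥0∞) (hρ : ∀ z, ρ z = 1 - ∫⁻ y, k z y ∂lam)
    (K : X → Measure X)
    (hK : ∀ z, K z = lam.withDensity (k z) + ρ z • Measure.dirac z) :
    ∀ n : ℕ, ∃ kn : X → ℝ≥0∞, Measurable kn ∧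
      iterStep K n x = lam.withDensity kn + (ρ x) ^ (n + 1) • Measure.dirac x :=
  iterated_kernel_decomposition_general lam x k hkMeas ρ hρ K hK
end
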